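/- Let (Λ, 𝔪) be a Noetherian complete local ring and let R = Λ⟦x₁,…,xₙ⟧/I with I ⊆ 𝔪·Λ⟦x₁,…,xₙ⟧ + (x₁,…,xₙ)². If a, b ∈ 𝔪ⁿ satisfy a_i − b_i ∈ 𝔪^ℓ for all i, then for every f ∈ I one has f(a) − f(b) ∈ 𝔪^{ℓ+1}. -/

import Mathlib

open scoped BigOperators

/-- The partial sum of the evaluation of `f ∈ Λ⟦x₁,…,xₙ⟧` at `a`, over multi-indices `e`
with `e i ≤ t` for all `i`. -/
noncomputable def partialEval {Λ : Type*} [CommRing Λ] {n : ℕ}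
    (f : MvPowerSeries (Fin n) Λ) (a : Fin n → Λ) (t : ℕ) : Λ :=
  ∑ e ∈ Finset.Iic (Finsupp.equivFunOnFinite.symm fun _ : Fin n => t),
    MvPowerSeries.coeff (R := Λ) e f * ∏ i, a i ^ e i

/-- `x` is the value `f(a)` of the power series `f` at the tuple `a` of elements of the maximal
ideal: the partial sums converge `𝔪`-adically to `x`. -/
def IsEvalAt {Λ : Type*} [CommRing Λ] [IsLocalRing Λ] {n : ℕ}
    (f : MvPowerSeries (Fin n) Λ) (a : Fin n → Λ) (x : Λ) : Prop :=
  ∀ t : ℕ, x - partialEval f a t ∈ (IsLocalRing.maximalIdeal Λ) ^ t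

/-!
Every `f ∈ I` has its coefficients of total degree `≤ 1` in `𝔪`. Comparing `f(a)` and `f(b)`
term by term, the constant terms cancel, the linear terms have coefficients in `𝔪` and differ
by elements of `𝔪^ℓ`, and a monomial of degree `d ≥ 2` changes by an element
of `𝔪^(ℓ + d - 1) ⊆ 𝔪^(ℓ + 1)`. Only the partial sums of degree `≤ ℓ + 1` in each variable
matter, since both evaluations agree with them modulo `𝔪^(ℓ + 1)`.
-/

namespace Ideal

variable {R ι : Type*} [CommRing R] {I : Ideal R} {m : ℕ}

theorem prod_sub_prod_mem_pow {u v : ι → R} {d : ι → ℕ} (s : Finset ι)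
    (hu : ∀ i ∈ s, u i ∈ I ^ d i) (hv : ∀ i ∈ s, v i ∈ I ^ d i)
    (huv : ∀ i ∈ s, u i - v i ∈ I ^ (m + d i)) :
    ∏ i ∈ s, u i - ∏ i ∈ s, v i ∈ I ^ (m + ∑ i ∈ s, d i) := by
  classical
  induction s using Finset.induction_on with
  | empty => simp
  | @insert j s hj ih =>
    simp only [Finset.mem_insert, forall_eq_or_imp] at hu hv huv
    rw [Finset.prod_insert hj, Finset.prod_insert hj, Finset.sum_insert hj]
    have hsplit : u j * ∏ i ∈ s, u i - v j * ∏ i ∈ s, v i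
        = (u j - v j) * ∏ i ∈ s, u i + v j * (∏ i ∈ s, u i - ∏ i ∈ s, v i) := by ring
    have hprod : ∏ i ∈ s, u i ∈ I ^ ∑ i ∈ s, d i := by
      rw [← Finset.prod_pow_eq_pow_sum]
      exact Ideal.prod_mem_prod hu.2
    rw [hsplit]
    refine Ideal.add_mem _ ?_ ?_
    · convert Ideal.mul_mem_mul huv.1 hprod using 1
      rw [← pow_add, add_assoc]
    · convert Ideal.mul_mem_mul hv.1 (ih hu.2 hv.2 huv.2) using 1
      rw [← pow_add, add_left_comm]

theorem pow_sub_pow_mem_pow {a b : R} (ha : a ∈ I) (hb : b ∈ I)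
    (hab : a - b ∈ I ^ (m + 1)) (k : ℕ) : a ^ k - b ^ k ∈ I ^ (m + k) := by
  simpa using prod_sub_prod_mem_pow (u := fun _ => a) (v := fun _ => b) (d := fun _ => 1)
    (Finset.range k) (fun _ _ => by simpa using ha) (fun _ _ => by simpa using hb)
    (fun _ _ => hab)

theorem prod_pow_sub_prod_pow_mem_pow [Fintype ι] {a b : ι → R} (ha : ∀ i, a i ∈ I)
    (hb : ∀ i, b i ∈ I) (hab : ∀ i, a i - b i ∈ I ^ (m + 1)) (e : ι → ℕ) :
    ∏ i, a i ^ e i - ∏ i, b i ^ e i ∈ I ^ (m + ∑ i, e i) :=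
  prod_sub_prod_mem_pow _ (fun i _ => Ideal.pow_mem_pow (ha i) _)
    (fun i _ => Ideal.pow_mem_pow (hb i) _)
    (fun i _ => pow_sub_pow_mem_pow (ha i) (hb i) (hab i) (e i))

end Ideal

namespace MvPowerSeries

variable {σ R : Type*} [CommRing R]

theorem coeff_mem_of_mem_map_C {I : Ideal R} {p : MvPowerSeries σ R} (hp : p ∈ I.map C)
    (e : σ →₀ ℕ) : coeff e p ∈ I := by
  have hker : I.map C ≤ RingHom.ker (map (σ := σ) (Ideal.Quotient.mk I)) :=
    Ideal.map_le_iff_le_comap.2 fun c hc => by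
      simp [map_C, Ideal.Quotient.eq_zero_iff_mem.2 hc]
  rw [← Ideal.Quotient.eq_zero_iff_mem, ← coeff_map, RingHom.mem_ker.1 (hker hp), map_zero]

theorem one_le_order_of_mem_span_X {p : MvPowerSeries σ R}
    (hp : p ∈ Ideal.span (Set.range X)) : 1 ≤ p.order := by
  have hker : Ideal.span (Set.range X) ≤ RingHom.ker (constantCoeff (σ := σ) (R := R)) :=
    Ideal.span_le.2 <| Set.range_subset_iff.2 constantCoeff_X
  exact one_le_order_iff_constCoeff_eq_zero.2 (hker hp)

theorem two_le_order_of_mem_span_X_sq {p : MvPowerSeries σ R}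
    (hp : p ∈ Ideal.span (Set.range X) ^ 2) : 2 ≤ p.order := by
  rw [sq] at hp
  refine Submodule.mul_induction_on hp (fun q hq r hr => ?_) fun q r hq hr => ?_
  · calc (2 : ℕ∞) = 1 + 1 := by norm_num
      _ ≤ q.order + r.order :=
        add_le_add (one_le_order_of_mem_span_X hq) (one_le_order_of_mem_span_X hr)
      _ ≤ (q * r).order := le_order_mul
  · exact (le_min hq hr).trans min_order_le_add

theorem coeff_mem_of_mem_map_C_sup_span_X_sq {I : Ideal R} {p : MvPowerSeries σ R}
    (hp : p ∈ I.map C ⊔ Ideal.span (Set.range X) ^ 2) {e : σ →₀ ℕ} (he : e.degree ≤ 1) :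
    coeff e p ∈ I := by
  obtain ⟨q, hq, r, hr, rfl⟩ := Submodule.mem_sup.1 hp
  have hr0 : coeff e r = 0 := coeff_of_lt_order <|
    (Nat.cast_lt.2 (Nat.lt_succ_of_le he)).trans_le (two_le_order_of_mem_span_X_sq hr)
  rw [map_add, hr0, add_zero]
  exact coeff_mem_of_mem_map_C hq e

end MvPowerSeries

theorem partialEval_sub_partialEval_mem_pow {Λ : Type*} [CommRing Λ] {I : Ideal Λ} {n m : ℕ}
    {f : MvPowerSeries (Fin n) Λ}
    (hf : ∀ e : Fin n →₀ ℕ, e.degree ≤ 1 → MvPowerSeries.coeff e f ∈ I)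
    {a b : Fin n → Λ} (ha : ∀ i, a i ∈ I) (hb : ∀ i, b i ∈ I)
    (hab : ∀ i, a i - b i ∈ I ^ (m + 1)) (t : ℕ) :
    partialEval f a t - partialEval f b t ∈ I ^ (m + 2) := by
  rw [partialEval, partialEval, ← Finset.sum_sub_distrib]
  refine Ideal.sum_mem _ fun e _ => ?_
  rw [← mul_sub]
  have hdiff := Ideal.prod_pow_sub_prod_pow_mem_pow ha hb hab e
  rw [← Finsupp.degree_eq_sum] at hdiff
  obtain h0 | h1 | h2 : e.degree = 0 ∨ e.degree = 1 ∨ 2 ≤ e.degree := by omega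
  · simp [(Finsupp.degree_eq_zero_iff e).1 h0]
  · rw [h1] at hdiff
    simpa [pow_succ'] using Ideal.mul_mem_mul (hf e h1.le) hdiff
  · exact Ideal.mul_mem_left _ _ (Ideal.pow_le_pow_right (by omega) hdiff)

theorem eval_sub_eval_mem_pow_succ_general {Λ : Type*} [CommRing Λ]
    [IsLocalRing Λ]
    {n : ℕ} (I : Ideal (MvPowerSeries (Fin n) Λ))
    (hI : I ≤ (IsLocalRing.maximalIdeal Λ).map (MvPowerSeries.C (σ := Fin n) (R := Λ)) ⊔
      (Ideal.span (Set.range (MvPowerSeries.X : Fin n → MvPowerSeries (Fin n) Λ))) ^ 2)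
    (ℓ : ℕ) (hℓ : 1 ≤ ℓ)
    (a b : Fin n → Λ)
    (haI : ∀ i, a i ∈ IsLocalRing.maximalIdeal Λ)
    (hbI : ∀ i, b i ∈ IsLocalRing.maximalIdeal Λ)
    (hab : ∀ i, a i - b i ∈ (IsLocalRing.maximalIdeal Λ) ^ ℓ)
    (f : MvPowerSeries (Fin n) Λ) (hf : f ∈ I)
    (x y : Λ) (hx : IsEvalAt f a x) (hy : IsEvalAt f b y) :
    x - y ∈ (IsLocalRing.maximalIdeal Λ) ^ (ℓ + 1) := by
  obtain ⟨m, rfl⟩ := Nat.exists_eq_add_of_le' hℓ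
  have hpartial := partialEval_sub_partialEval_mem_pow
    (fun e he => MvPowerSeries.coeff_mem_of_mem_map_C_sup_span_X_sq (hI hf) he)
    haI hbI hab (m + 2)
  have hsplit : x - y = (x - partialEval f a (m + 2)) - (y - partialEval f b (m + 2))
      + (partialEval f a (m + 2) - partialEval f b (m + 2)) := by ring
  rw [hsplit]
  exact Ideal.add_mem _ (Ideal.sub_mem _ (hx _) (hy _)) hpartial

/-- Let `(Λ, 𝔪)` be a Noetherian complete local ring and `I ⊆ 𝔪·Λ⟦x₁,…,xₙ⟧ + (x₁,…,xₙ)²` an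
ideal of `Λ⟦x₁,…,xₙ⟧` (so `R = Λ⟦x₁,…,xₙ⟧/I`).  If `a, b ∈ 𝔪ⁿ` satisfy `a i − b i ∈ 𝔪^ℓ`
for all `i` (with `ℓ ≥ 1`), then `f(a) − f(b) ∈ 𝔪^{ℓ+1}` for every `f ∈ I`. -/
theorem eval_sub_eval_mem_pow_succ {Λ : Type*} [CommRing Λ] [IsNoetherianRing Λ]
    [IsLocalRing Λ]
    (hcomplete : IsAdicComplete (IsLocalRing.maximalIdeal Λ) Λ)
    {n : ℕ} (I : Ideal (MvPowerSeries (Fin n) Λ))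
    (hI : I ≤ (IsLocalRing.maximalIdeal Λ).map (MvPowerSeries.C (σ := Fin n) (R := Λ)) ⊔
      (Ideal.span (Set.range (MvPowerSeries.X : Fin n → MvPowerSeries (Fin n) Λ))) ^ 2)
    (ℓ : ℕ) (hℓ : 1 ≤ ℓ)
    (a b : Fin n → Λ)
    (haI : ∀ i, a i ∈ IsLocalRing.maximalIdeal Λ)
    (hbI : ∀ i, b i ∈ IsLocalRing.maximalIdeal Λ)
    (hab : ∀ i, a i - b i ∈ (IsLocalRing.maximalIdeal Λ) ^ ℓ)
    (f : MvPowerSeries (Fin n) Λ) (hf : f ∈ I)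
    (x y : Λ) (hx : IsEvalAt f a x) (hy : IsEvalAt f b y) :
    x - y ∈ (IsLocalRing.maximalIdeal Λ) ^ (ℓ + 1) :=
  eval_sub_eval_mem_pow_succ_general I hI ℓ hℓ a b haI hbI hab f hf x y hx hy
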